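/- Fundamental lemma of the calculus of variations for fractional double integrals: let R = [a,b] × [c,d], α ∈ (0,1), and F : R → ℝ continuous. If α² ∫_a^b ∫_c^d F(x,y) η(x,y) (b-x)^(α-1)(d-y)^(α-1) dy dx = 0 for every continuously differentiable η : R → ℝ with η = 0 on the boundary ∂R, then F(x,y) = 0 for all (x,y) ∈ R. -/
import Mathlib


open Real Set MeasureTheory intervalIntegral Function

noncomputable section

/-- Jumarie (modified Riemann--Liouville) fractional derivative of order `α` with base point `a`. -/
def jum (α a : ℝ) (f : ℝ → ℝ) (x : ℝ) : ℝ :=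
  (1 / Real.Gamma (1 - α)) *
    deriv (fun z => ∫ t in a..z, (z - t) ^ (-α) * (f t - f a)) x

/-- Fractional partial derivative in the first variable. -/
def fracDx (α a : ℝ) (f : ℝ → ℝ → ℝ) (x y : ℝ) : ℝ :=
  jum α a (fun t => f t y) x

/-- Fractional partial derivative in the second variable. -/
def fracDy (α c : ℝ) (f : ℝ → ℝ → ℝ) (x y : ℝ) : ℝ :=
  jum α c (fun t => f x t) y

/-- Fractional volume integral over `R = [a,b] × [c,d]`. -/
def fracVol (α a b c d : ℝ) (f : ℝ → ℝ → ℝ) : ℝ :=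
  α ^ 2 * ∫ x in a..b, ∫ y in c..d, f x y * (b - x) ^ (α - 1) * (d - y) ^ (α - 1)

/-- First fractional line integral on `∂R`. -/
def lineInt1 (α a b c d : ℝ) (f : ℝ → ℝ → ℝ) : ℝ :=
  α * ∫ t in a..b, (f t c - f t d) * (b - t) ^ (α - 1)

/-- Second fractional line integral on `∂R`. -/
def lineInt2 (α a b c d : ℝ) (f : ℝ → ℝ → ℝ) : ℝ :=
  α * ∫ t in c..d, (f b t - f a t) * (d - t) ^ (α - 1)

/-- Fractional line integral on `∂R`. -/
def lineInt (α a b c d : ℝ) (f : ℝ → ℝ → ℝ) : ℝ :=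
  lineInt1 α a b c d f + lineInt2 α a b c d f

/-- The rectangle `R = [a,b] × [c,d]`. -/
def Rect (a b c d : ℝ) : Set (ℝ × ℝ) := Icc a b ×ˢ Icc c d

/-- Partial derivative of a Lagrangian in its third argument. -/
def p3 (F : ℝ → ℝ → ℝ → ℝ → ℝ → ℝ) : ℝ → ℝ → ℝ → ℝ → ℝ → ℝ :=
  fun x y u v w => deriv (fun s => F x y s v w) u

/-- Partial derivative of a Lagrangian in its fourth argument. -/
def p4 (F : ℝ → ℝ → ℝ → ℝ → ℝ → ℝ) : ℝ → ℝ → ℝ → ℝ → ℝ → ℝ :=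
  fun x y u v w => deriv (fun s => F x y u s w) v

/-- Partial derivative of a Lagrangian in its fifth argument. -/
def p5 (F : ℝ → ℝ → ℝ → ℝ → ℝ → ℝ) : ℝ → ℝ → ℝ → ℝ → ℝ → ℝ :=
  fun x y u v w => deriv (fun s => F x y u v s) w

/-- The operator `{u}`: evaluation of a Lagrangian along `u` and its fractional derivatives. -/
def comp5 (α a c : ℝ) (F : ℝ → ℝ → ℝ → ℝ → ℝ → ℝ) (u : ℝ → ℝ → ℝ) : ℝ → ℝ → ℝ :=
  fun x y => F x y (u x y) (fracDx α a u x y) (fracDy α c u x y)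

/-- The Euler--Lagrange expression `∂₃F{u} − aDx^α[1]∂₄F{u} − cDy^α[2]∂₅F{u}`. -/
def EL (α a c : ℝ) (F : ℝ → ℝ → ℝ → ℝ → ℝ → ℝ) (u : ℝ → ℝ → ℝ) (x y : ℝ) : ℝ :=
  comp5 α a c (p3 F) u x y - fracDx α a (comp5 α a c (p4 F) u) x y
    - fracDy α c (comp5 α a c (p5 F) u) x y

/-- The fractional variational functional with Lagrangian `F`. -/
def Jfun (α a b c d : ℝ) (F : ℝ → ℝ → ℝ → ℝ → ℝ → ℝ) (u : ℝ → ℝ → ℝ) : ℝ :=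
  fracVol α a b c d (comp5 α a c F u)

/-- Supremum of `|v|` over the rectangle. -/
def supAbs (a b c d : ℝ) (v : ℝ → ℝ → ℝ) : ℝ :=
  ⨆ p : Rect a b c d, |v (p : ℝ × ℝ).1 (p : ℝ × ℝ).2|

/-- The norm `‖v − u‖₁,∞ = max|v−u| + max|aDx^α[1](v−u)| + max|cDy^α[2](v−u)|`. -/
def norm1 (α a b c d : ℝ) (u v : ℝ → ℝ → ℝ) : ℝ :=
  supAbs a b c d (fun x y => v x y - u x y)
    + supAbs a b c d (fun x y => fracDx α a v x y - fracDx α a u x y)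
    + supAbs a b c d (fun x y => fracDy α c v x y - fracDy α c u x y)

/-- `F` is continuously differentiable as a function of its five real arguments. -/
def C1 (F : ℝ → ℝ → ℝ → ℝ → ℝ → ℝ) : Prop :=
  ContDiff ℝ 1 fun p : ℝ × ℝ × ℝ × ℝ × ℝ => F p.1 p.2.1 p.2.2.1 p.2.2.2.1 p.2.2.2.2

/-- The combined Lagrangian `H = λ₀ f + λ g`. -/
def combo (l0 l : ℝ) (f g : ℝ → ℝ → ℝ → ℝ → ℝ → ℝ) : ℝ → ℝ → ℝ → ℝ → ℝ → ℝ :=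
  fun x y u v w => l0 * f x y u v w + l * g x y u v w

/-- Admissibility for the isoperimetric problem with boundary condition `ψ`. -/
def Adm (α a b c d K : ℝ) (g : ℝ → ℝ → ℝ → ℝ → ℝ → ℝ) (ψ u : ℝ → ℝ → ℝ) : Prop :=
  ContinuousOn (uncurry u) (Rect a b c d) ∧ Jfun α a b c d g u = K ∧
    ∀ p ∈ frontier (Rect a b c d), u p.1 p.2 = ψ p.1 p.2

/-- Admissibility for the isoperimetric problem with free boundary values. -/
def AdmFree (α a b c d K : ℝ) (g : ℝ → ℝ → ℝ → ℝ → ℝ → ℝ) (u : ℝ → ℝ → ℝ) : Prop :=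
  ContinuousOn (uncurry u) (Rect a b c d) ∧ Jfun α a b c d g u = K

/-- Admissibility for the unconstrained problem with boundary condition `ψ`. -/
def Adm0 (a b c d : ℝ) (ψ u : ℝ → ℝ → ℝ) : Prop :=
  ContinuousOn (uncurry u) (Rect a b c d) ∧
    ∀ p ∈ frontier (Rect a b c d), u p.1 p.2 = ψ p.1 p.2


lemma hasDerivAt_posSq (t : ℝ) : HasDerivAt (fun s : ℝ => (max s 0)^2) (2 * max t 0) t := by
  rcases lt_trichotomy t 0 with h | h | h
  · have he : (fun s : ℝ => (max s 0)^2) =ᶠ[nhds t] fun _ => (0:ℝ) := by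
      filter_upwards [Iio_mem_nhds h] with s hs
      simp [max_eq_right (le_of_lt (mem_Iio.mp hs))]
    simpa [max_eq_right h.le] using (hasDerivAt_const t (0:ℝ)).congr_of_eventuallyEq he
  · subst h
    rw [hasDerivAt_iff_tendsto_slope]
    have hb : ∀ s : ℝ, ‖slope (fun s : ℝ => (max s 0)^2) 0 s‖ ≤ |s| := by
      intro s
      have : slope (fun s : ℝ => (max s 0)^2) 0 s = (max s 0)^2 / s := by
        simp [slope_def_field]
      rw [this]
      rcases le_or_gt s 0 with hs | hs
      · simp [max_eq_right hs]
      · rw [max_eq_left hs.le, sq, mul_div_assoc, div_self hs.ne', mul_one]; exact le_refl _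
    simpa using squeeze_zero_norm hb
      ((continuous_abs.tendsto' 0 0 (by simp)).mono_left nhdsWithin_le_nhds)
  · have he : (fun s : ℝ => (max s 0)^2) =ᶠ[nhds t] fun s => s^2 := by
      filter_upwards [Ioi_mem_nhds h] with s hs
      simp [max_eq_left (le_of_lt (mem_Ioi.mp hs))]
    have h2 : HasDerivAt (fun s : ℝ => s^2) (2 * t) t := by
      simpa using (hasDerivAt_pow 2 t)
    simpa [max_eq_left h.le] using h2.congr_of_eventuallyEq he

lemma contDiff_posSq : ContDiff ℝ 1 (fun s : ℝ => (max s 0)^2) := by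
  rw [contDiff_one_iff_deriv]
  have hd : deriv (fun s : ℝ => (max s 0)^2) = fun t => 2 * max t 0 := by
    funext t; exact (hasDerivAt_posSq t).deriv
  refine ⟨fun t => (hasDerivAt_posSq t).differentiableAt, ?_⟩
  rw [hd]; fun_prop

noncomputable def bump (p q x : ℝ) : ℝ := (max ((x - p) * (q - x)) 0)^2

lemma contDiff_bump' (p q : ℝ) : ContDiff ℝ 1 (bump p q) := by
  have : bump p q = (fun s : ℝ => (max s 0)^2) ∘ (fun x => (x - p) * (q - x)) := rfl
  rw [this]
  exact contDiff_posSq.comp (by fun_prop)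

lemma bump_nonneg (p q x : ℝ) : 0 ≤ bump p q x := sq_nonneg _

lemma bump_pos {p q x : ℝ} (h1 : p < x) (h2 : x < q) : 0 < bump p q x := by
  have : (0:ℝ) < (x - p) * (q - x) := mul_pos (by linarith) (by linarith)
  simp only [bump, max_eq_left this.le]
  positivity

lemma bump_eq_zero {p q x : ℝ} (hpq : p ≤ q) (h : x ≤ p ∨ q ≤ x) : bump p q x = 0 := by
  have : (x - p) * (q - x) ≤ 0 := by
    rcases h with h | h
    · exact mul_nonpos_of_nonpos_of_nonneg (by linarith) (by linarith)
    · exact mul_nonpos_of_nonneg_of_nonpos (by linarith) (by linarith)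
  simp [bump, max_eq_right this]

lemma key_pos (α a b c d : ℝ) (hα : α ∈ Ioo (0:ℝ) 1) (hab : a < b) (hcd : c < d)
    (F : ℝ → ℝ → ℝ) (hF : ContinuousOn (uncurry F) (Rect a b c d))
    {x₀ y₀ : ℝ} (hx₀ : x₀ ∈ Icc a b) (hy₀ : y₀ ∈ Icc c d) (hpos : 0 < F x₀ y₀) :
    ∃ η : ℝ → ℝ → ℝ, ContDiff ℝ 1 (uncurry η) ∧
      (∀ p ∈ frontier (Rect a b c d), η p.1 p.2 = 0) ∧
      fracVol α a b c d (fun x y => F x y * η x y) ≠ 0 := by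
  obtain ⟨hα0, hα1⟩ := hα
  have hmem : (x₀, y₀) ∈ Rect a b c d := ⟨hx₀, hy₀⟩
  have hc := hF (x₀, y₀) hmem
  rw [Metric.continuousWithinAt_iff] at hc
  obtain ⟨δ, hδ, hball⟩ := hc (F x₀ y₀ / 2) (by linarith)
  -- choose the subrectangle
  set x₁ := max a (x₀ - δ/2) with hx₁def
  set vx := min b (x₀ + δ/2) with hvxdef
  set x₂ := (x₁ + vx)/2 with hx₂def
  have hx1vx : x₁ < vx := max_lt (lt_min hab (by linarith [hx₀.1]))
    (lt_min (by linarith [hx₀.2]) (by linarith))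
  have hx12 : x₁ < x₂ := by rw [hx₂def]; linarith
  have hx2vx : x₂ < vx := by rw [hx₂def]; linarith
  have hx2b : x₂ < b := lt_of_lt_of_le hx2vx (min_le_left _ _)
  have hax1 : a ≤ x₁ := le_max_left _ _
  have hxprop : ∀ x ∈ Icc x₁ x₂, x ∈ Icc a b ∧ |x - x₀| < δ := by
    intro x hx
    have h1 : x₀ - δ/2 ≤ x₁ := le_max_right _ _
    have h2 : vx ≤ x₀ + δ/2 := min_le_right _ _
    have h3 : vx ≤ b := min_le_left _ _
    constructor
    · exact ⟨le_trans hax1 hx.1, by linarith [hx.2, hx2vx]⟩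
    · rw [abs_lt]; constructor <;> linarith [hx.1, hx.2, hx2vx]
  set y₁ := max c (y₀ - δ/2) with hy₁def
  set vy := min d (y₀ + δ/2) with hvydef
  set y₂ := (y₁ + vy)/2 with hy₂def
  have hy1vy : y₁ < vy := max_lt (lt_min hcd (by linarith [hy₀.1]))
    (lt_min (by linarith [hy₀.2]) (by linarith))
  have hy12 : y₁ < y₂ := by rw [hy₂def]; linarith
  have hy2vy : y₂ < vy := by rw [hy₂def]; linarith
  have hy2d : y₂ < d := lt_of_lt_of_le hy2vy (min_le_left _ _)
  have hcy1 : c ≤ y₁ := le_max_left _ _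
  have hyprop : ∀ y ∈ Icc y₁ y₂, y ∈ Icc c d ∧ |y - y₀| < δ := by
    intro y hy
    have h1 : y₀ - δ/2 ≤ y₁ := le_max_right _ _
    have h2 : vy ≤ y₀ + δ/2 := min_le_right _ _
    have h3 : vy ≤ d := min_le_left _ _
    constructor
    · exact ⟨le_trans hcy1 hy.1, by linarith [hy.2, hy2vy]⟩
    · rw [abs_lt]; constructor <;> linarith [hy.1, hy.2, hy2vy]
  -- F is large on the subrectangle
  have hFpos : ∀ x ∈ Icc x₁ x₂, ∀ y ∈ Icc y₁ y₂, F x₀ y₀ / 2 < F x y := by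
    intro x hx y hy
    obtain ⟨hxab, hxd⟩ := hxprop x hx
    obtain ⟨hycd, hyd⟩ := hyprop y hy
    have hdist : dist (x, y) (x₀, y₀) < δ := by
      rw [Prod.dist_eq]
      exact max_lt (by simpa [Real.dist_eq] using hxd) (by simpa [Real.dist_eq] using hyd)
    have := hball (show (x, y) ∈ Rect a b c d from ⟨hxab, hycd⟩) hdist
    rw [Real.dist_eq, abs_lt] at this
    have := this.1
    simp only [uncurry] at this
    linarith
  -- the test function
  refine ⟨fun x y => bump x₁ x₂ x * bump y₁ y₂ y, ?_, ?_, ?_⟩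
  · exact ((contDiff_bump' x₁ x₂).comp contDiff_fst).mul
      ((contDiff_bump' y₁ y₂).comp contDiff_snd)
  · intro p hp
    rw [Rect, frontier_prod_eq, frontier_Icc hab.le, frontier_Icc hcd.le] at hp
    rcases hp with ⟨_, hp2⟩ | ⟨hp1, _⟩
    · have h2 : p.2 = c ∨ p.2 = d := by simpa using hp2
      rcases h2 with h | h
      · simp [h, bump_eq_zero hy12.le (Or.inl hcy1)]
      · simp [h, bump_eq_zero hy12.le (Or.inr hy2d.le)]
    · have h1 : p.1 = a ∨ p.1 = b := by simpa using hp1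
      rcases h1 with h | h
      · simp [h, bump_eq_zero hx12.le (Or.inl hax1)]
      · simp [h, bump_eq_zero hx12.le (Or.inr hx2b.le)]
  -- the integral is nonzero
  · set g : ℝ × ℝ → ℝ := fun p =>
      F p.1 p.2 * (bump x₁ x₂ p.1 * bump y₁ y₂ p.2) * (b - p.1) ^ (α - 1) * (d - p.2) ^ (α - 1)
      with hg
    set K : Set (ℝ × ℝ) := Icc x₁ x₂ ×ˢ Icc y₁ y₂ with hK
    have hsupp : support g ⊆ K := by
      intro p hp
      by_contra hpK
      apply hp
      rcases not_and_or.mp hpK with h | h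
      · rcases not_and_or.mp (fun h' => h (mem_Icc.mpr h')) with h | h
        · simp [hg, bump_eq_zero hx12.le (Or.inl (le_of_not_ge h))]
        · simp [hg, bump_eq_zero hx12.le (Or.inr (le_of_not_ge h))]
      · rcases not_and_or.mp (fun h' => h (mem_Icc.mpr h')) with h | h
        · simp [hg, bump_eq_zero hy12.le (Or.inl (le_of_not_ge h))]
        · simp [hg, bump_eq_zero hy12.le (Or.inr (le_of_not_ge h))]
    have hKR : K ⊆ Rect a b c d := fun p hp =>
      ⟨(hxprop p.1 hp.1).1, (hyprop p.2 hp.2).1⟩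
    have hcontK : ContinuousOn g K := by
      have h1 : ContinuousOn (fun p : ℝ × ℝ => F p.1 p.2) K := hF.mono hKR
      have h2 : ContinuousOn (fun p : ℝ × ℝ => (b - p.1) ^ (α - 1)) K := by
        apply ContinuousOn.rpow_const (by fun_prop)
        intro p hp
        exact Or.inl (ne_of_gt (sub_pos.mpr (lt_of_le_of_lt hp.1.2 hx2b)))
      have h3 : ContinuousOn (fun p : ℝ × ℝ => (d - p.2) ^ (α - 1)) K := by
        apply ContinuousOn.rpow_const (by fun_prop)
        intro p hp
        exact Or.inl (ne_of_gt (sub_pos.mpr (lt_of_le_of_lt hp.2.2 hy2d)))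
      have hb : Continuous (fun p : ℝ × ℝ => bump x₁ x₂ p.1 * bump y₁ y₂ p.2) :=
        ((contDiff_bump' x₁ x₂).continuous.comp continuous_fst).mul
          ((contDiff_bump' y₁ y₂).continuous.comp continuous_snd)
      exact ((h1.mul hb.continuousOn).mul h2).mul h3
    have hInt : Integrable g := by
      rw [← integrableOn_iff_integrable_of_support_subset hsupp]
      exact hcontK.integrableOn_compact (isCompact_Icc.prod isCompact_Icc)
    have hInt2 : IntegrableOn g (Ioc a b ×ˢ Ioc c d) (volume.prod volume) := by
      rw [← Measure.volume_eq_prod]; exact hInt.integrableOn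
    have hEq : fracVol α a b c d
        (fun x y => F x y * (bump x₁ x₂ x * bump y₁ y₂ y)) =
        α ^ 2 * ∫ p in Ioc a b ×ˢ Ioc c d, g p := by
      rw [fracVol]
      congr 1
      rw [intervalIntegral.integral_of_le hab.le,
        show (volume : Measure (ℝ × ℝ)) = volume.prod volume from
          Measure.volume_eq_prod ℝ ℝ,
        MeasureTheory.setIntegral_prod g hInt2]
      refine setIntegral_congr_fun measurableSet_Ioc (fun x _ => ?_)
      rw [intervalIntegral.integral_of_le hcd.le]
    have hIpos : 0 < ∫ p in Ioc a b ×ˢ Ioc c d, g p := by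
      have hnn : 0 ≤ᵐ[volume.restrict (Ioc a b ×ˢ Ioc c d)] g := by
        refine ae_restrict_of_forall_mem (measurableSet_Ioc.prod measurableSet_Ioc) ?_
        intro p hp
        show (0:ℝ) ≤ g p
        by_cases hpK : p ∈ K
        · have hFp : 0 < F p.1 p.2 :=
            lt_trans (by linarith) (hFpos p.1 hpK.1 p.2 hpK.2)
          exact mul_nonneg (mul_nonneg (mul_nonneg hFp.le
            (mul_nonneg (bump_nonneg _ _ _) (bump_nonneg _ _ _)))
            (Real.rpow_nonneg (by linarith [hp.1.2]) _))
            (Real.rpow_nonneg (by linarith [hp.2.2]) _)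
        · have : g p = 0 := by_contra fun h' => hpK (hsupp h')
          rw [this]
      rw [setIntegral_pos_iff_support_of_nonneg_ae hnn hInt.integrableOn]
      refine lt_of_lt_of_le ?_ (measure_mono (show Ioo x₁ x₂ ×ˢ Ioo y₁ y₂ ⊆
        support g ∩ Ioc a b ×ˢ Ioc c d from ?_))
      · rw [show (volume : Measure (ℝ × ℝ)) = volume.prod volume from
          Measure.volume_eq_prod ℝ ℝ,
          Measure.prod_prod, Real.volume_Ioo, Real.volume_Ioo]
        exact ENNReal.mul_pos (by simp [hx12]) (by simp [hy12])
      · rintro ⟨x, y⟩ ⟨hx, hy⟩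
        have hx' : x₁ < x ∧ x < x₂ := ⟨hx.1, hx.2⟩
        have hy' : y₁ < y ∧ y < y₂ := ⟨hy.1, hy.2⟩
        constructor
        · have hFp : 0 < F x y := lt_trans (by linarith)
            (hFpos x (Ioo_subset_Icc_self hx) y (Ioo_subset_Icc_self hy))
          have hbx : (0:ℝ) < b - x := by linarith [hx'.2]
          have hby : (0:ℝ) < d - y := by linarith [hy'.2]
          have h1 := bump_pos hx'.1 hx'.2
          have h2 := bump_pos hy'.1 hy'.2
          have hwx := Real.rpow_pos_of_pos hbx (α - 1)
          have hwy := Real.rpow_pos_of_pos hby (α - 1)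
          show g (x, y) ≠ 0
          exact ne_of_gt (mul_pos (mul_pos (mul_pos hFp (mul_pos h1 h2)) hwx) hwy)
        · exact ⟨⟨lt_of_le_of_lt hax1 hx'.1, (lt_trans hx'.2 hx2b).le⟩,
            lt_of_le_of_lt hcy1 hy'.1, (lt_trans hy'.2 hy2d).le⟩
    show fracVol α a b c d (fun x y => F x y * (bump x₁ x₂ x * bump y₁ y₂ y)) ≠ 0
    rw [hEq]
    exact ne_of_gt (mul_pos (pow_pos hα0 2) hIpos)

/-- Fundamental lemma of the calculus of variations for fractional double integrals. -/
theorem fundamental_lemma_fractional (α a b c d : ℝ) (hα : α ∈ Ioo (0:ℝ) 1)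
    (hab : a < b) (hcd : c < d) (F : ℝ → ℝ → ℝ)
    (hF : ContinuousOn (uncurry F) (Rect a b c d))
    (h : ∀ η : ℝ → ℝ → ℝ, ContDiff ℝ 1 (uncurry η) →
      (∀ p ∈ frontier (Rect a b c d), η p.1 p.2 = 0) →
      fracVol α a b c d (fun x y => F x y * η x y) = 0) :
    ∀ x ∈ Icc a b, ∀ y ∈ Icc c d, F x y = 0 := by
  intro x hx y hy
  by_contra hne
  rcases Ne.lt_or_gt hne with hlt | hgt
  · obtain ⟨η, h1, h2, h3⟩ := key_pos α a b c d hα hab hcd (fun x y => -F x y)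
      hF.neg hx hy (neg_pos.mpr hlt)
    refine h3 ?_
    have h0 := h η h1 h2
    simp only [fracVol, neg_mul, intervalIntegral.integral_neg, mul_neg, neg_eq_zero] at h0 ⊢
    exact h0
  · obtain ⟨η, h1, h2, h3⟩ := key_pos α a b c d hα hab hcd F hF hx hy hgt
    exact h3 (h η h1 h2)
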